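/- arXiv:0906.2605 — 2 statements merged into one kernel-verified Lean document; each statement's English description precedes it below -/
import Mathlib

section
/- Let β ∈ B_3 be represented by a word of the form σ2^{k_1} · σ1 · w, where k_1 ∈ ℤ and w is a word in the letters σ1, σ2^{±1} containing no occurrence of σ1^{-1}. Then for every integer j with j + k_1 > 0, the element σ1^{-1} σ2^{j} β σ2^{-j} σ1 is σ1-positive; indeed it is represented by the word σ2 · σ1^{j+k_1} · σ2^{-1} · w · σ2^{-j} · σ1. -/
/-- The single braid relation of `B₃`: σ₁σ₂σ₁ = σ₂σ₁σ₂. -/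
def braidRels3 : Set (FreeGroup (Fin 2)) :=
  { FreeGroup.of 0 * FreeGroup.of 1 * FreeGroup.of 0 *
      (FreeGroup.of 1 * FreeGroup.of 0 * FreeGroup.of 1)⁻¹ }

/-- The braid group `B₃ = ⟨σ₁, σ₂ | σ₁σ₂σ₁ = σ₂σ₁σ₂⟩`. -/
abbrev B₃ : Type := PresentedGroup braidRels3

def σ₁ : B₃ := PresentedGroup.of 0
def σ₂ : B₃ := PresentedGroup.of 1

/-- The group element represented by a single letter `σᵢ^{±1}`
(`true` = positive letter, `false` = inverse letter). -/
def letterB₃ (x : Fin 2 × Bool) : B₃ :=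
  if x.2 then PresentedGroup.of x.1 else (PresentedGroup.of x.1)⁻¹

/-- An element of `B₃` is σ₁-positive if it is represented by some word in
`σ₁^{±1}, σ₂^{±1}` containing at least one `σ₁` and no `σ₁⁻¹`. -/
def IsSigmaOnePositive (β : B₃) : Prop :=
  ∃ w : List (Fin 2 × Bool),
    (w.map letterB₃).prod = β ∧ ((0 : Fin 2), true) ∈ w ∧ ((0 : Fin 2), false) ∉ w

lemma braid3 : σ₁ * σ₂ * σ₁ = σ₂ * σ₁ * σ₂ := by
  have h : PresentedGroup.mk braidRels3
      (FreeGroup.of 0 * FreeGroup.of 1 * FreeGroup.of 0 *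
        (FreeGroup.of 1 * FreeGroup.of 0 * FreeGroup.of 1)⁻¹) = 1 := by
    apply (QuotientGroup.eq_one_iff _).mpr
    exact Subgroup.subset_normalClosure rfl
  simp only [map_mul, map_inv] at h
  have := mul_inv_eq_one.mp h
  simpa [σ₁, σ₂, PresentedGroup.of] using this

lemma conj3 (n : ℤ) : σ₁⁻¹ * σ₂ ^ n * σ₁ = σ₂ * σ₁ ^ n * σ₂⁻¹ := by
  have h1 : σ₁⁻¹ * σ₂ * σ₁ = σ₂ * σ₁ * σ₂⁻¹ := by
    calc σ₁⁻¹ * σ₂ * σ₁ = σ₁⁻¹ * (σ₂ * σ₁ * σ₂) * σ₂⁻¹ := by group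
      _ = σ₁⁻¹ * (σ₁ * σ₂ * σ₁) * σ₂⁻¹ := by rw [braid3]
      _ = σ₂ * σ₁ * σ₂⁻¹ := by group
  have h2 := (conj_zpow (i := n) (a := σ₁⁻¹) (b := σ₂)).symm
  simp only [inv_inv] at h2
  rw [h2, h1, conj_zpow]

/-- word for σᵢ^m -/
def zword (i : Fin 2) (m : ℤ) : List (Fin 2 × Bool) :=
  if 0 ≤ m then List.replicate m.toNat (i, true) else List.replicate (-m).toNat (i, false)

lemma zword_prod (i : Fin 2) (m : ℤ) :
    ((zword i m).map letterB₃).prod = (PresentedGroup.of i : B₃) ^ m := by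
  unfold zword
  split_ifs with h
  · rw [List.map_replicate, List.prod_replicate, letterB₃]
    simp [← zpow_natCast, Int.toNat_of_nonneg h]
  · rw [List.map_replicate, List.prod_replicate]
    show ((PresentedGroup.of i : B₃)⁻¹) ^ (-m).toNat = _
    rw [inv_pow, ← zpow_natCast, ← zpow_neg]
    congr 1
    omega

lemma zword_not_mem (m : ℤ) (b : Bool) : ((0 : Fin 2), b) ∉ zword 1 m := by
  unfold zword
  split_ifs <;> simp [List.mem_replicate]

/-- If `β = σ₂^{k₁} · σ₁ · w` where the word `w` contains no occurrence of
`σ₁⁻¹`, then for every integer `j` with `j + k₁ > 0` the element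
`σ₁⁻¹ σ₂ʲ β σ₂⁻ʲ σ₁` equals `σ₂ · σ₁^{j+k₁} · σ₂⁻¹ · w · σ₂⁻ʲ · σ₁` and is
σ₁-positive. -/
theorem stmt_10 (k₁ : ℤ) (w : List (Fin 2 × Bool))
    (hw : ((0 : Fin 2), false) ∉ w)
    (β : B₃) (hβ : β = σ₂ ^ k₁ * σ₁ * (w.map letterB₃).prod) :
    ∀ j : ℤ, j + k₁ > 0 →
      σ₁⁻¹ * σ₂ ^ j * β * σ₂ ^ (-j) * σ₁ =
        σ₂ * σ₁ ^ (j + k₁) * σ₂⁻¹ * (w.map letterB₃).prod * σ₂ ^ (-j) * σ₁ ∧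
      IsSigmaOnePositive (σ₁⁻¹ * σ₂ ^ j * β * σ₂ ^ (-j) * σ₁) := by
  intro j hj
  have heq : σ₁⁻¹ * σ₂ ^ j * β * σ₂ ^ (-j) * σ₁ =
      σ₂ * σ₁ ^ (j + k₁) * σ₂⁻¹ * (w.map letterB₃).prod * σ₂ ^ (-j) * σ₁ := by
    rw [hβ, ← conj3 (j + k₁)]
    rw [zpow_add]
    group
  refine ⟨heq, ?_⟩
  refine ⟨((1 : Fin 2), true) :: List.replicate (j + k₁).toNat ((0 : Fin 2), true)
      ++ ((1 : Fin 2), false) :: w ++ zword 1 (-j) ++ [((0 : Fin 2), true)], ?_, ?_, ?_⟩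
  · rw [heq]
    simp only [List.map_append, List.map_cons, List.prod_append, List.prod_cons,
      List.map_replicate, List.prod_replicate, List.map_nil, List.prod_nil, mul_one,
      zword_prod]
    have hσ1 : letterB₃ ((0 : Fin 2), true) = σ₁ := rfl
    have hσ2 : letterB₃ ((1 : Fin 2), true) = σ₂ := rfl
    have hσ2' : letterB₃ ((1 : Fin 2), false) = σ₂⁻¹ := rfl
    rw [hσ1, hσ2, hσ2']
    have : σ₁ ^ (j + k₁).toNat = σ₁ ^ (j + k₁) := by
      rw [← zpow_natCast]; congr 1; omega
    rw [this, show (PresentedGroup.of 1 : B₃) = σ₂ from rfl]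
    group
  · simp
  · intro hmem
    simp only [List.mem_append, List.mem_cons, List.mem_singleton] at hmem
    rcases hmem with (((h | h) | h | h) | h) | h
    · simp at h
    · have := List.eq_of_mem_replicate h; simp at this
    · simp at h
    · exact hw h
    · exact zword_not_mem (-j) false h
    · simp at h
end

section
/- For every n ≥ 5, the braid group B_n admits no Conradian left-invariant total order. -/
/-- The braid relations on `m` generators `σ₀, …, σ_{m-1}` (presenting the braid
group `B_{m+1}`): `σᵢσⱼσᵢ = σⱼσᵢσⱼ` when `j = i+1`, and `σᵢσⱼ = σⱼσᵢ` when
`|i - j| ≥ 2`. -/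
def braidRels (m : ℕ) : Set (FreeGroup (Fin m)) :=
  { x | (∃ i j : Fin m, (i : ℕ) + 1 = (j : ℕ) ∧
          x = FreeGroup.of i * FreeGroup.of j * FreeGroup.of i *
              (FreeGroup.of j * FreeGroup.of i * FreeGroup.of j)⁻¹) ∨
        (∃ i j : Fin m, (i : ℕ) + 2 ≤ (j : ℕ) ∧
          x = FreeGroup.of i * FreeGroup.of j * (FreeGroup.of j * FreeGroup.of i)⁻¹) }

/-- The braid group `Bₙ` on `n - 1` generators. -/
abbrev BraidGroup (n : ℕ) : Type := PresentedGroup (braidRels (n - 1))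

/-- A left-invariant total order (left order) on a group `G`. -/
def IsLeftOrder {G : Type*} [Group G] (r : G → G → Prop) : Prop :=
  IsStrictTotalOrder G r ∧ ∀ h f g : G, r f g → r (h * f) (h * g)

/-- A left order is Conradian if for all positive `f, g` there is `k : ℕ`
with `g ≺ f·gᵏ`. -/
def IsConradian {G : Type*} [Group G] (r : G → G → Prop) : Prop :=
  ∀ f g : G, r 1 f → r 1 g → ∃ k : ℕ, r g (f * g ^ k)

/-
A Conradian left order on a finitely generated group `G ≠ 1` has a largest proper convex
subgroup `N`. The Conrad condition, in its strong form `g < f g²`, makes `N` normal and makes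
every positive element outside `N` cofinal, so `G ⧸ N` is an archimedean left-ordered group,
hence abelian by Hölder's theorem; thus `⁅G, G⁆ ≠ G`.

For `n ≥ 5` the subgroup of `Bₙ` generated by the `σᵢσ₀⁻¹` is finitely generated, nontrivial and
perfect: conjugation by `σ₀` preserves it, and in its abelianization the braid relations together
with the `σ₀`-conjugates of the far commutation relations force every `σᵢσ₀⁻¹` to vanish.
So it admits no Conradian left order, and neither does `Bₙ`.
-/

section LeftOrdered

variable {G : Type*} [Group G] [LinearOrder G] [MulLeftMono G]

theorem commute_of_forall_one_lt (h : ∀ x y : G, 1 < x → 1 < y → Commute x y) (x y : G) :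
    Commute x y := by
  have hy : ∀ y : G, 1 < y → ∀ x, Commute x y := by
    intro y hy x
    rcases lt_trichotomy 1 x with hx | rfl | hx
    · exact h x y hx hy
    · exact Commute.one_left y
    · simpa using (h x⁻¹ y (Left.one_lt_inv_iff.2 hx) hy).inv_left
  rcases lt_trichotomy 1 y with h1 | rfl | h1
  · exact hy y h1 x
  · exact Commute.one_right x
  · simpa using (hy y⁻¹ (Left.one_lt_inv_iff.2 h1) x).inv_right

theorem exists_one_lt_mul_self_le [MulRightMono G] (hdense : ∀ a : G, 1 < a → ∃ b, 1 < b ∧ b < a)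
    {a : G} (ha : 1 < a) : ∃ b, 1 < b ∧ b * b ≤ a := by
  obtain ⟨c, hc, hca⟩ := hdense a ha
  rcases le_or_gt (c * c) a with h | h
  · exact ⟨c, hc, h⟩
  · refine ⟨a * c⁻¹, lt_mul_inv_iff_mul_lt.2 (by rwa [one_mul]), ?_⟩
    calc a * c⁻¹ * (a * c⁻¹) ≤ a * c⁻¹ * c := mul_le_mul_right (mul_inv_lt_iff_lt_mul.2 h).le _
      _ = a := inv_mul_cancel_right a c

section Archimedean

variable (harch : ∀ a b : G, 1 < a → ∃ n : ℕ, b < a ^ n)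
include harch

theorem exists_pow_le_lt_pow_succ {b x : G} (hb : 1 < b) (hx : 1 ≤ x) :
    ∃ n : ℕ, b ^ n ≤ x ∧ x < b ^ (n + 1) := by
  classical
  have hex : ∃ n : ℕ, x < b ^ (n + 1) := by
    obtain ⟨n, hn⟩ := harch b x hb
    exact ⟨n, hn.trans (pow_lt_pow_right' hb n.lt_succ_self)⟩
  refine ⟨Nat.find hex, ?_, Nat.find_spec hex⟩
  cases hk : Nat.find hex with
  | zero => simpa using hx
  | succ k => exact not_lt.1 (Nat.find_min hex (by omega : k < Nat.find hex))

theorem exists_eq_pow_of_forall_le {e x : G} (he : 1 < e) (hmin : ∀ b, 1 < b → e ≤ b)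
    (hx : 1 ≤ x) : ∃ n : ℕ, x = e ^ n := by
  obtain ⟨n, hle, hlt⟩ := exists_pow_le_lt_pow_succ harch he hx
  have h1 : 1 ≤ (e ^ n)⁻¹ * x := le_inv_mul_iff_mul_le.2 (by rwa [mul_one])
  have h2 : (e ^ n)⁻¹ * x < e := inv_mul_lt_iff_lt_mul.2 (by rwa [← pow_succ])
  obtain h | h := h1.eq_or_lt
  · exact ⟨n, (inv_mul_eq_one.1 h.symm).symm⟩
  · exact ((hmin _ h).not_gt h2).elim

theorem mul_le_of_lt_one_of_one_lt {w g : G} (hw : w < 1) (hg : 1 < g) : w * g ≤ g := by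
  by_contra! hwg
  have hpos : ∀ n : ℕ, 1 < w ^ n * g := by
    intro n
    induction n with
    | zero => simpa using hg
    | succ n ih =>
      calc 1 < w ^ n * g := ih
        _ < w ^ n * (w * g) := mul_lt_mul_right hwg _
        _ = w ^ (n + 1) * g := by rw [← mul_assoc, ← pow_succ]
  obtain ⟨n, hn⟩ := harch w⁻¹ g (Left.one_lt_inv_iff.2 hw)
  have := mul_lt_mul_right hn (w ^ n)
  rw [inv_pow, mul_inv_cancel] at this
  exact (hpos n).not_gt this

theorem one_lt_conj_of_one_lt {a : G} (ha : 1 < a) (g : G) : 1 < g * a * g⁻¹ := by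
  have key : ∀ {a g : G}, 1 < a → 1 < g → ¬ g * a * g⁻¹ < 1 := fun {a g} ha hg hw =>
    (mul_le_of_lt_one_of_one_lt harch hw hg).not_gt
      (by simpa [mul_assoc] using lt_mul_of_one_lt_right' g ha)
  have hne : g * a * g⁻¹ ≠ 1 := fun h => ha.ne' (conj_eq_one_iff.1 h)
  refine (lt_or_gt_of_ne hne).resolve_left fun hw => ?_
  rcases lt_trichotomy 1 g with hg | rfl | hg
  · exact key ha hg hw
  · simp only [one_mul, inv_one, mul_one] at hw
    exact hw.not_gt ha
  · apply key (Left.one_lt_inv_iff.2 hw) (Left.one_lt_inv_iff.2 hg)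
    rw [show g⁻¹ * (g * a * g⁻¹)⁻¹ * g⁻¹⁻¹ = a⁻¹ by group]
    exact Left.inv_lt_one_iff.2 ha

theorem mulRightMono_of_archimedean : MulRightMono G := by
  constructor
  intro c a b hab
  rcases hab.eq_or_lt with rfl | hab
  · exact le_rfl
  have h := one_lt_conj_of_one_lt harch (lt_inv_mul_iff_mul_lt.2 (by rwa [mul_one])) c⁻¹
  calc a * c ≤ a * c * (c⁻¹ * (a⁻¹ * b) * c⁻¹⁻¹) := (lt_mul_of_one_lt_right' _ h).le
    _ = b * c := by group

theorem commute_of_one_lt_of_dense [MulRightMono G]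
    (hdense : ∀ a : G, 1 < a → ∃ b, 1 < b ∧ b < a) {x y : G} (hx : 1 < x) (hy : 1 < y) :
    Commute x y := by
  by_contra hxy
  wlog h : y * x < x * y generalizing x y
  · exact this hy hx (fun h' => hxy h'.symm) ((not_lt.1 h).lt_of_ne hxy)
  have hcomm : 1 < (y * x)⁻¹ * (x * y) := lt_inv_mul_iff_mul_lt.2 (by rwa [mul_one])
  obtain ⟨b, hb, hba⟩ := exists_one_lt_mul_self_le hdense hcomm
  obtain ⟨k, hk, hk'⟩ := exists_pow_le_lt_pow_succ harch hb hx.le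
  obtain ⟨l, hl, hl'⟩ := exists_pow_le_lt_pow_succ harch hb hy.le
  -- both `x y` and `y x` lie in `[b ^ (k + l), b ^ (k + l + 2))`
  have h1 : (y * x)⁻¹ ≤ (b ^ (l + k))⁻¹ :=
    inv_le_inv_iff.2 (by rw [pow_add]; exact mul_le_mul' hl hk)
  have h2 : x * y < b ^ (l + k) * (b * b) := by
    calc x * y < b ^ (k + 1) * b ^ (l + 1) := mul_lt_mul_of_lt_of_lt hk' hl'
      _ = b ^ (l + k) * (b * b) := by rw [← pow_add, ← sq, ← pow_add]; ring_nf
  have : (y * x)⁻¹ * (x * y) < b * b :=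
    calc (y * x)⁻¹ * (x * y) < (b ^ (l + k))⁻¹ * (b ^ (l + k) * (b * b)) :=
          mul_lt_mul_of_le_of_lt h1 h2
      _ = b * b := inv_mul_cancel_left _ _
  exact this.not_ge hba

theorem commute_of_archimedean (x y : G) : Commute x y := by
  have := mulRightMono_of_archimedean harch
  refine commute_of_forall_one_lt (fun x y hx hy => ?_) x y
  by_cases hmin : ∃ e : G, 1 < e ∧ ∀ b, 1 < b → e ≤ b
  · obtain ⟨e, he, hmin⟩ := hmin
    obtain ⟨k, rfl⟩ := exists_eq_pow_of_forall_le harch he hmin hx.le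
    obtain ⟨l, rfl⟩ := exists_eq_pow_of_forall_le harch he hmin hy.le
    exact Commute.pow_pow_self e k l
  · push Not at hmin
    exact commute_of_one_lt_of_dense harch hmin hx hy

end Archimedean

end LeftOrdered

section ConvexSubgroups

variable {G : Type*} [Group G] [LinearOrder G]

theorem lt_of_mem_of_notMem {C : Subgroup G} (hC : (C : Set G).OrdConnected) {x p : G}
    (hx : x ∈ C) (hp : p ∉ C) (h1 : 1 < p) : x < p :=
  lt_of_not_ge fun hpx => hp (hC.out (one_mem C) hx ⟨h1.le, hpx⟩)

variable (G) in
def properConvexSubgroups : Set (Subgroup G) := {C | (C : Set G).OrdConnected ∧ C ≠ ⊤}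

variable (G) in
def maxConvexSubgroup : Subgroup G := sSup (properConvexSubgroups G)

theorem bot_mem_properConvexSubgroups [Nontrivial G] : ⊥ ∈ properConvexSubgroups G :=
  ⟨by rw [Subgroup.coe_bot]; exact Set.ordConnected_singleton, bot_ne_top⟩

theorem le_maxConvexSubgroup {C : Subgroup G} (hC : (C : Set G).OrdConnected) (hne : C ≠ ⊤) :
    C ≤ maxConvexSubgroup G :=
  le_sSup ⟨hC, hne⟩

variable [MulLeftMono G]

theorem exists_one_lt_mem_notMem {C D : Subgroup G} (h : ¬ C ≤ D) : ∃ c ∈ C, c ∉ D ∧ 1 < c := by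
  obtain ⟨c, hcC, hcD⟩ := SetLike.not_le_iff_exists.1 h
  rcases lt_trichotomy 1 c with hc | rfl | hc
  · exact ⟨c, hcC, hcD, hc⟩
  · exact absurd (one_mem D) hcD
  · exact ⟨c⁻¹, inv_mem hcC, fun h => hcD (inv_mem_iff.1 h), Left.one_lt_inv_iff.2 hc⟩

theorem le_total_of_ordConnected {C D : Subgroup G} (hC : (C : Set G).OrdConnected)
    (hD : (D : Set G).OrdConnected) : C ≤ D ∨ D ≤ C := by
  by_contra! h
  obtain ⟨c, hcC, hcD, hc⟩ := exists_one_lt_mem_notMem h.1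
  obtain ⟨d, hdD, hdC, hd⟩ := exists_one_lt_mem_notMem h.2
  rcases le_total c d with hcd | hdc
  · exact hcD (hD.out (one_mem D) hdD ⟨hc.le, hcd⟩)
  · exact hdC (hC.out (one_mem C) hcC ⟨hd.le, hdc⟩)

theorem isChain_properConvexSubgroups : IsChain (· ≤ ·) (properConvexSubgroups G) :=
  fun _ hC _ hD _ => le_total_of_ordConnected hC.1 hD.1

theorem mem_maxConvexSubgroup [Nontrivial G] {x : G} :
    x ∈ maxConvexSubgroup G ↔ ∃ C ∈ properConvexSubgroups G, x ∈ C :=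
  Subgroup.mem_sSup_of_directedOn ⟨⊥, bot_mem_properConvexSubgroups⟩
    isChain_properConvexSubgroups.directedOn

instance [Nontrivial G] : (maxConvexSubgroup G : Set G).OrdConnected := by
  refine ⟨fun x hx z hz y hy => ?_⟩
  obtain ⟨C, hC, hxC⟩ := mem_maxConvexSubgroup.1 hx
  obtain ⟨D, hD, hzD⟩ := mem_maxConvexSubgroup.1 hz
  rcases le_total_of_ordConnected hC.1 hD.1 with h | h
  · exact mem_maxConvexSubgroup.2 ⟨D, hD, hD.1.out (h hxC) hzD hy⟩
  · exact mem_maxConvexSubgroup.2 ⟨C, hC, hC.1.out hxC (h hzD) hy⟩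

theorem maxConvexSubgroup_ne_top [Nontrivial G] [Group.FG G] : maxConvexSubgroup G ≠ ⊤ := by
  intro htop
  obtain ⟨S, hS⟩ := Group.fg_def.1 ‹_›
  have hcover : (S : Set G) ⊆ ⋃ C ∈ properConvexSubgroups G, (C : Set G) := fun x _ => by
    obtain ⟨C, hC, hx⟩ := mem_maxConvexSubgroup.1 (htop ▸ Subgroup.mem_top x)
    exact Set.mem_biUnion hC hx
  obtain ⟨C, hC, hSC⟩ := DirectedOn.exists_mem_subset_of_finset_subset_biUnion
    ⟨⊥, bot_mem_properConvexSubgroups⟩ isChain_properConvexSubgroups.directedOn hcover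
  exact hC.2 (eq_top_iff.2 (hS ▸ (Subgroup.closure_le C).2 hSC))

end ConvexSubgroups

namespace QuotientGroup

variable {G : Type*} [Group G] [LinearOrder G] [MulLeftMono G]
  (C : Subgroup G) [hC : (C : Set G).OrdConnected]
include hC

theorem mk_eq_mk_of_le_of_le {x y z : G} (hxy : x ≤ y) (hyz : y ≤ z)
    (hxz : (x : G ⧸ C) = z) : (x : G ⧸ C) = y := by
  rw [QuotientGroup.eq] at hxz ⊢
  exact hC.out (one_mem C) hxz
    ⟨by simpa using mul_le_mul_right hxy x⁻¹, mul_le_mul_right hyz x⁻¹⟩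

theorem lt_of_lt_of_mk_ne {x y x' y' : G} (hxy : x < y) (hne : (x : G ⧸ C) ≠ y)
    (hx : (x' : G ⧸ C) = x) (hy : (y' : G ⧸ C) = y) : x' < y' := by
  by_contra! h
  rcases le_total x y' with h1 | h1
  · exact hne ((mk_eq_mk_of_le_of_le C h1 h hx.symm).trans hy)
  · exact hne ((mk_eq_mk_of_le_of_le C h1 hxy.le hy).symm.trans hy)

noncomputable instance : LinearOrder (G ⧸ C) := by
  classical
  refine @linearOrderOfSTO _
    (fun A B => ∀ x y : G, (x : G ⧸ C) = A → (y : G ⧸ C) = B → x < y) ?_ _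
  exact
    { irrefl := fun A h => by
        obtain ⟨x, rfl⟩ := mk_surjective A
        exact lt_irrefl x (h x x rfl rfl)
      trans := fun A B D hAB hBD x z hx hz => by
        obtain ⟨y, rfl⟩ := mk_surjective B
        exact (hAB x y hx rfl).trans (hBD y z rfl hz)
      trichotomous := fun A B hAB hBA => by
        obtain ⟨x, rfl⟩ := mk_surjective A
        obtain ⟨y, rfl⟩ := mk_surjective B
        by_contra hne
        rcases lt_or_gt_of_ne fun h : x = y => hne (h ▸ rfl) with h | h
        · exact hAB fun x' y' hx hy => lt_of_lt_of_mk_ne C h hne hx hy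
        · exact hBA fun y' x' hy hx => lt_of_lt_of_mk_ne C h (Ne.symm hne) hy hx }

theorem lt_iff_forall {A B : G ⧸ C} :
    A < B ↔ ∀ x y : G, (x : G ⧸ C) = A → (y : G ⧸ C) = B → x < y :=
  Iff.rfl

theorem lt_of_mk_lt_mk {x y : G} (h : (x : G ⧸ C) < y) : x < y :=
  (lt_iff_forall C).1 h x y rfl rfl

theorem mk_le_mk_of_le {x y : G} (h : x ≤ y) : (x : G ⧸ C) ≤ y :=
  le_of_not_gt fun h' => (lt_of_mk_lt_mk C h').not_ge h

instance [C.Normal] : MulLeftMono (G ⧸ C) := by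
  constructor
  intro P A B hAB
  rcases hAB.eq_or_lt with rfl | hAB
  · exact le_rfl
  refine le_of_lt ((lt_iff_forall C).2 fun u v hu hv => ?_)
  obtain ⟨p, rfl⟩ := mk_surjective P
  refine (mul_lt_mul_iff_left p⁻¹).1 ((lt_iff_forall C).1 hAB _ _ ?_ ?_)
  · rw [mk_mul, mk_inv, hu, inv_mul_cancel_left]
  · rw [mk_mul, mk_inv, hv, inv_mul_cancel_left]

theorem exists_lt_pow_of_one_lt [C.Normal]
    (hcof : ∀ h : G, 1 < h → h ∉ C → ∀ y : G, ∃ n : ℕ, y < h ^ n)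
    (A B : G ⧸ C) (hA : 1 < A) : ∃ n : ℕ, B < A ^ n := by
  obtain ⟨a, rfl⟩ := mk_surjective A
  obtain ⟨b, rfl⟩ := mk_surjective B
  have ha : 1 < a := lt_of_mk_lt_mk C (by rwa [mk_one])
  obtain ⟨n, hn⟩ := hcof a ha (fun h => hA.ne' ((eq_one_iff a).2 h)) b
  refine ⟨n + 1, (mk_le_mk_of_le C hn.le).trans_lt ?_⟩
  rw [mk_pow]
  exact pow_lt_pow_right' hA n.lt_succ_self

end QuotientGroup

def powerBounded {G : Type*} [Monoid G] [LT G] (d : G) : Set G := {x | ∃ n : ℕ, x < d ^ n}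

namespace IsConradian

variable {G : Type*} [Group G] [LinearOrder G] [MulLeftMono G]
  (hC : IsConradian ((· < ·) : G → G → Prop))
include hC

theorem lt_mul_sq {f g : G} (hf : 1 < f) (hg : 1 < g) : g < f * g ^ 2 := by
  by_contra! hle
  have hh : 1 < f * g := Left.one_lt_mul hf hg
  have hpow : ∀ k : ℕ, (f * g) ^ k * g ≤ g := by
    intro k
    induction k with
    | zero => simp
    | succ k ih =>
      calc (f * g) ^ (k + 1) * g = (f * g) ^ k * (f * g ^ 2) := by rw [pow_succ, sq]; group
        _ ≤ (f * g) ^ k * g := mul_le_mul_right hle _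
        _ ≤ g := ih
  obtain ⟨k, hk⟩ := hC f (f * g) hf hh
  have hgk : g < (f * g) ^ k := (mul_lt_mul_iff_left f).1 hk
  have hneg : g⁻¹ * (((f * g) ^ k)⁻¹ * g) < 1 :=
    Left.mul_lt_one (Left.inv_lt_one_iff.2 hg) (inv_mul_lt_one_iff.2 hgk)
  have hinv : (g⁻¹ * (((f * g) ^ k)⁻¹ * g))⁻¹ = g⁻¹ * ((f * g) ^ k * g) := by group
  have : g * 1 < (f * g) ^ k * g :=
    lt_inv_mul_iff_mul_lt.1 (hinv ▸ Left.one_lt_inv_iff.2 hneg)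
  rw [mul_one] at this
  exact (hpow k).not_gt this

theorem mul_lt_sq {t p : G} (ht : t < 1) (hp : 1 < p) : t * p < p ^ 2 := by
  simpa using (mul_lt_mul_iff_left t).2 (hC.lt_mul_sq (Left.one_lt_inv_iff.2 ht) hp)

theorem mul_pow_mem_powerBounded {d x : G} (hd : 1 < d) (hx : x ∈ powerBounded d) (k : ℕ) :
    x * d ^ k ∈ powerBounded d := by
  induction k with
  | zero => simpa using hx
  | succ k ih =>
    obtain ⟨n, hn⟩ := ih
    have hu : (d ^ n)⁻¹ * (x * d ^ k) < 1 := inv_mul_lt_one_iff.2 hn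
    obtain ⟨l, hl⟩ := hC _ d (Left.one_lt_inv_iff.2 hu) hd
    refine ⟨n + l, ?_⟩
    calc x * d ^ (k + 1) = d ^ n * ((d ^ n)⁻¹ * (x * d ^ k) * d) := by group
      _ < d ^ n * d ^ l := by
        refine mul_lt_mul_right ?_ _
        simpa [mul_assoc] using (mul_lt_mul_iff_left ((d ^ n)⁻¹ * (x * d ^ k))).2 hl
      _ = d ^ (n + l) := (pow_add d n l).symm

theorem mul_mem_powerBounded {d x y : G} (hd : 1 < d) (hx : x ∈ powerBounded d)
    (hy : y ∈ powerBounded d) : x * y ∈ powerBounded d := by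
  obtain ⟨l, hl⟩ := hy
  obtain ⟨N, hN⟩ := hC.mul_pow_mem_powerBounded hd hx l
  exact ⟨N, (mul_lt_mul_right hl x).trans hN⟩

/-- For a Conradian order this is the convex subgroup generated by `d`. -/
def boundedSubgroup {d : G} (hd : 1 < d) : Subgroup G where
  carrier := {x | x ∈ powerBounded d ∧ x⁻¹ ∈ powerBounded d}
  one_mem' := ⟨⟨1, by simpa using hd⟩, ⟨1, by simpa using hd⟩⟩
  mul_mem' := fun ⟨hx, hx'⟩ ⟨hy, hy'⟩ =>
    ⟨hC.mul_mem_powerBounded hd hx hy,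
      by rw [mul_inv_rev]; exact hC.mul_mem_powerBounded hd hy' hx'⟩
  inv_mem' := fun ⟨hx, hx'⟩ => ⟨hx', by rwa [inv_inv]⟩

theorem self_mem_boundedSubgroup {d : G} (hd : 1 < d) : d ∈ hC.boundedSubgroup hd :=
  ⟨⟨2, by simpa using pow_lt_pow_right' hd one_lt_two⟩, ⟨0, by simpa using hd⟩⟩

theorem ordConnected_boundedSubgroup {d : G} (hd : 1 < d) :
    (hC.boundedSubgroup hd : Set G).OrdConnected := by
  refine ⟨fun x hx z hz y ⟨hxy, hyz⟩ => ⟨?_, ?_⟩⟩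
  · obtain ⟨n, hn⟩ := hz.1
    exact ⟨n, hyz.trans_lt hn⟩
  · have : y⁻¹ * x ∈ powerBounded d := ⟨1, (inv_mul_le_one_iff.2 hxy).trans_lt (by simpa using hd)⟩
    simpa only [mul_inv_cancel_right] using hC.mul_mem_powerBounded hd this hx.2

theorem exists_lt_pow_of_notMem {h : G} (hh : 1 < h) (hN : h ∉ maxConvexSubgroup G) (y : G) :
    ∃ n : ℕ, y < h ^ n := by
  have htop : hC.boundedSubgroup hh = ⊤ := by
    by_contra hne
    exact hN (le_maxConvexSubgroup (hC.ordConnected_boundedSubgroup hh) hne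
      (hC.self_mem_boundedSubgroup hh))
  have hy : y ∈ hC.boundedSubgroup hh := htop ▸ Subgroup.mem_top y
  exact hy.1

theorem exists_conj_lt [Nontrivial G] {g : G} (hg : g ∉ maxConvexSubgroup G) :
    ∃ p, ∀ b ∈ maxConvexSubgroup G, g * b * g⁻¹ < p := by
  have hconv : (maxConvexSubgroup G : Set G).OrdConnected := inferInstance
  rcases lt_or_gt_of_ne fun h : g = 1 => hg (h ▸ one_mem _) with hg1 | hg1
  · refine ⟨g⁻¹ ^ 2, fun b hb => hC.mul_lt_sq (lt_inv_iff_mul_lt_one'.1 ?_)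
      (Left.one_lt_inv_iff.2 hg1)⟩
    exact lt_of_mem_of_notMem hconv hb (fun h => hg (inv_mem_iff.1 h)) (Left.one_lt_inv_iff.2 hg1)
  · refine ⟨g ^ 2, fun b hb => ?_⟩
    calc g * b * g⁻¹ < g * b := mul_lt_of_lt_one_right' _ (Left.inv_lt_one_iff.2 hg1)
      _ < g * g := mul_lt_mul_right (lt_of_mem_of_notMem hconv hb hg hg1) g
      _ = g ^ 2 := (sq g).symm

theorem maxConvexSubgroup_normal [Nontrivial G] : (maxConvexSubgroup G).Normal := by
  refine ⟨fun c hc g => ?_⟩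
  by_cases hg : g ∈ maxConvexSubgroup G
  · exact mul_mem (mul_mem hg hc) (inv_mem hg)
  by_contra hk
  obtain ⟨p, hp⟩ := hC.exists_conj_lt hg
  obtain ⟨c', hc', hpos, hc'N⟩ : ∃ c' ∈ maxConvexSubgroup G,
      1 < g * c' * g⁻¹ ∧ g * c' * g⁻¹ ∉ maxConvexSubgroup G := by
    rcases lt_or_gt_of_ne fun h : g * c * g⁻¹ = 1 => hk (h ▸ one_mem _) with h | h
    · refine ⟨c⁻¹, inv_mem hc, ?_, ?_⟩
      · rw [← conj_inv]; exact Left.one_lt_inv_iff.2 h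
      · rwa [← conj_inv, inv_mem_iff]
    · exact ⟨c, hc, h, hk⟩
  obtain ⟨n, hn⟩ := hC.exists_lt_pow_of_notMem hpos hc'N p
  rw [conj_pow] at hn
  exact (hp _ (pow_mem hc' n)).not_gt hn

theorem commutator_ne_top [Group.FG G] [Nontrivial G] : commutator G ≠ ⊤ := by
  have := hC.maxConvexSubgroup_normal
  have hcomm : ∀ A B : G ⧸ maxConvexSubgroup G, Commute A B :=
    commute_of_archimedean <| QuotientGroup.exists_lt_pow_of_one_lt _ fun _ hh hN =>
      hC.exists_lt_pow_of_notMem hh hN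
  intro htop
  refine maxConvexSubgroup_ne_top (G := G) (eq_top_iff.2 ?_)
  rw [← htop, commutator_def, Subgroup.commutator_le]
  intro a _ b _
  rw [← QuotientGroup.eq_one_iff]
  exact (map_commutatorElement (QuotientGroup.mk' _) a b).trans
    (commutatorElement_eq_one_iff_commute.2 (hcomm _ _))

end IsConradian

instance {G : Type*} [Group G] [LinearOrder G] [MulLeftMono G] (H : Subgroup G) : MulLeftMono H :=
  ⟨fun a _ _ h => mul_le_mul_right (α := G) h a⟩

theorem IsConradian.commutator_ne_top_of_isLeftOrder {G : Type*} [Group G] {r : G → G → Prop}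
    (hLO : IsLeftOrder r) (hC : IsConradian r) (H : Subgroup G) [Group.FG H] [Nontrivial H] :
    commutator H ≠ ⊤ := by
  classical
  have := hLO.1
  -- the strict order of `linearOrderOfSTO r` is `r` itself, so `hC` transfers by definition
  let : LinearOrder G := linearOrderOfSTO r
  have : MulLeftMono G := by
    constructor
    intro a b c h
    rcases h with rfl | h
    · exact le_rfl
    · exact le_of_lt (hLO.2 a b c h)
  exact IsConradian.commutator_ne_top (G := H) fun f g hf hg => hC f g hf hg

theorem apply_eq_apply_of_far {α : Type*} {m : ℕ} (f : Fin m → α) (hm : 4 ≤ m)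
    (hf : ∀ i j : Fin m, (i : ℕ) + 2 ≤ j → f i = f j) (i j : Fin m) : f i = f j := by
  have h0 : ∀ i : Fin m, f i = f ⟨0, by omega⟩ := by
    intro i
    obtain hi | hi | hi : (i : ℕ) = 0 ∨ (i : ℕ) = 1 ∨ 2 ≤ (i : ℕ) := by omega
    · exact congrArg f (Fin.ext hi)
    · rw [hf i ⟨3, by omega⟩ (by simp [hi]), hf ⟨0, by omega⟩ ⟨3, by omega⟩ (by simp)]
    · exact (hf ⟨0, by omega⟩ i (by simpa using hi)).symm
  rw [h0 i, h0 j]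

theorem apply_eq_apply_of_adjacent {α : Type*} {m : ℕ} (f : Fin m → α)
    (hf : ∀ i j : Fin m, (i : ℕ) + 1 = j → f i = f j) (i j : Fin m) : f i = f j := by
  have h0 : ∀ (k : ℕ) (hk : k < m), f ⟨k, hk⟩ = f ⟨0, by omega⟩ := by
    intro k hk
    induction k with
    | zero => rfl
    | succ k ih => rw [← hf ⟨k, by omega⟩ ⟨k + 1, hk⟩ rfl, ih]
  exact (h0 i i.2).trans (h0 j j.2).symm

theorem apply_eq_apply_of_braid_relations {A : Type*} [CommGroup A] {m : ℕ} (hm : 4 ≤ m)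
    (a b c : Fin m → A) (hfar : ∀ i j : Fin m, (i : ℕ) + 2 ≤ j → b i * c j = b j * c i)
    (hbraid : ∀ i j : Fin m, (i : ℕ) + 1 = j → a i * b j * c i = a j * b i * c j) (i j : Fin m) :
    a i = a j := by
  have hbc : ∀ i j : Fin m, b i * c j = b j * c i := fun i j =>
    div_eq_div_iff_mul_eq_mul.1 <| apply_eq_apply_of_far (fun i => b i / c i) hm
      (fun i j h => div_eq_div_iff_mul_eq_mul.2 (hfar i j h)) i j
  refine apply_eq_apply_of_adjacent a (fun i j h => ?_) i j
  refine mul_right_cancel (b := b i * c j * (b j * c i)) ?_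
  calc a i * (b i * c j * (b j * c i)) = a i * b j * c i * (b i * c j) := by ac_rfl
    _ = a j * b i * c j * (b j * c i) := by rw [hbraid i j h, hbc i j]
    _ = a j * (b i * c j * (b j * c i)) := by ac_rfl

structure IsBraidFamily {B : Type*} [Group B] {m : ℕ} (s : Fin m → B) : Prop where
  braid : ∀ i j : Fin m, (i : ℕ) + 1 = j → s i * s j * s i = s j * s i * s j
  comm : ∀ i j : Fin m, (i : ℕ) + 2 ≤ j → s i * s j = s j * s i

theorem isBraidFamily_of (m : ℕ) :
    IsBraidFamily (PresentedGroup.of : Fin m → PresentedGroup (braidRels m)) where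
  braid i j h := PresentedGroup.mk_eq_mk_of_mul_inv_mem (Or.inl ⟨i, j, h, rfl⟩)
  comm i j h := PresentedGroup.mk_eq_mk_of_mul_inv_mem (Or.inr ⟨i, j, h, rfl⟩)

theorem isBraidFamily_swap (m : ℕ) :
    IsBraidFamily fun i : Fin m => Equiv.swap (i : ℕ) (i + 1) where
  braid i j h := by
    simp only [← h]
    have h1 := Equiv.swap_mul_swap_mul_swap (x := (i : ℕ) + 1 + 1) (y := i + 1) (z := i)
      (by omega) (by omega)
    have h2 := Equiv.swap_mul_swap_mul_swap (x := (i : ℕ)) (y := i + 1) (z := i + 1 + 1)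
      (by omega) (by omega)
    rw [Equiv.swap_comm (i + 1 : ℕ) i, Equiv.swap_comm (i + 1 + 1 : ℕ) (i + 1)] at h1
    rw [h1, h2, Equiv.swap_comm]
  comm i j h := (Equiv.Perm.disjoint_swap_swap (by simp; omega)).commute.eq

theorem IsBraidFamily.lift_eq_one {B : Type*} [Group B] {m : ℕ} {s : Fin m → B}
    (hs : IsBraidFamily s) : ∀ r ∈ braidRels m, FreeGroup.lift s r = 1 := by
  rintro _ (⟨i, j, h, rfl⟩ | ⟨i, j, h, rfl⟩) <;>
    simp only [map_mul, map_inv, FreeGroup.lift_apply_of, mul_inv_eq_one]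
  · exact hs.braid i j h
  · exact hs.comm i j h

section RatioSubgroup

variable {B : Type*} [Group B] {m : ℕ} [NeZero m]

/-- In the braid group this is the commutator subgroup, made of the braids of exponent sum
zero. -/
def ratioSubgroup (s : Fin m → B) : Subgroup B :=
  Subgroup.closure (Set.range fun i => s i * (s 0)⁻¹)

variable {s : Fin m → B}

instance : Group.FG (ratioSubgroup s) := Group.closure_finite_fg _

theorem gen_mem_ratioSubgroup (i : Fin m) : s i * (s 0)⁻¹ ∈ ratioSubgroup s :=
  Subgroup.subset_closure ⟨i, rfl⟩

theorem mul_inv_mem_ratioSubgroup (i j : Fin m) : s i * (s j)⁻¹ ∈ ratioSubgroup s := by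
  simpa [mul_assoc] using
    mul_mem (gen_mem_ratioSubgroup i) (inv_mem (gen_mem_ratioSubgroup (s := s) j))

namespace IsBraidFamily

variable (hs : IsBraidFamily s)
include hs

theorem inv_mul_mem_ratioSubgroup {i j : Fin m} (h : (i : ℕ) + 2 ≤ j ∨ (j : ℕ) + 2 ≤ i) :
    (s i)⁻¹ * s j ∈ ratioSubgroup s := by
  have hc : Commute (s i) (s j) := by
    rcases h with h | h
    · exact hs.comm i j h
    · exact (hs.comm j i h).symm
  rw [hc.inv_left.eq]
  exact mul_inv_mem_ratioSubgroup j i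

theorem conj_gen_mem_ratioSubgroup (hm : 4 ≤ m) (i : Fin m) :
    s 0 * (s i * (s 0)⁻¹) * (s 0)⁻¹ ∈ ratioSubgroup s := by
  obtain hi | hi | hi : (i : ℕ) = 0 ∨ (i : ℕ) = 1 ∨ 2 ≤ (i : ℕ) := by omega
  · obtain rfl : i = 0 := Fin.ext hi
    simp [one_mem]
  · -- `σ₁⁻¹σ₀` lies in the subgroup because `σ₃` commutes with both `σ₀` and `σ₁`
    let k : Fin m := ⟨3, by omega⟩
    have hb : s 0 * s i * s 0 = s i * s 0 * s i := hs.braid 0 i (by simp [hi])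
    have key : s 0 * (s i * (s 0)⁻¹) * (s 0)⁻¹ =
        (s i)⁻¹ * s k * ((s k)⁻¹ * s 0) * (s i * (s 0)⁻¹) := by
      calc s 0 * (s i * (s 0)⁻¹) * (s 0)⁻¹
          = (s i)⁻¹ * (s i * s 0 * s i) * ((s 0)⁻¹ * (s 0)⁻¹) := by group
        _ = (s i)⁻¹ * (s 0 * s i * s 0) * ((s 0)⁻¹ * (s 0)⁻¹) := by rw [hb]
        _ = (s i)⁻¹ * s k * ((s k)⁻¹ * s 0) * (s i * (s 0)⁻¹) := by group
    rw [key]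
    refine mul_mem (mul_mem ?_ ?_) (gen_mem_ratioSubgroup i)
    · exact hs.inv_mul_mem_ratioSubgroup (Or.inl (by simp [k, hi]))
    · exact hs.inv_mul_mem_ratioSubgroup (Or.inr (by simp [k]))
  · have hc : s 0 * s i = s i * s 0 := hs.comm 0 i (by simpa using hi)
    have key : s 0 * (s i * (s 0)⁻¹) * (s 0)⁻¹ = s i * (s 0)⁻¹ := by
      calc s 0 * (s i * (s 0)⁻¹) * (s 0)⁻¹ = s 0 * s i * ((s 0)⁻¹ * (s 0)⁻¹) := by group
        _ = s i * s 0 * ((s 0)⁻¹ * (s 0)⁻¹) := by rw [hc]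
        _ = s i * (s 0)⁻¹ := by group
    rw [key]
    exact gen_mem_ratioSubgroup i

theorem conj_mem_ratioSubgroup (hm : 4 ≤ m) {x : B} (hx : x ∈ ratioSubgroup s) :
    s 0 * x * (s 0)⁻¹ ∈ ratioSubgroup s := by
  have hle : (ratioSubgroup s).map (MulAut.conj (s 0)).toMonoidHom ≤ ratioSubgroup s := by
    rw [ratioSubgroup, MonoidHom.map_closure, Subgroup.closure_le]
    rintro _ ⟨_, ⟨i, rfl⟩, rfl⟩
    exact hs.conj_gen_mem_ratioSubgroup hm i
  exact hle (Subgroup.mem_map_of_mem _ hx)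

theorem map_gen_eq_one (hm : 4 ≤ m) {A : Type*} [CommGroup A] (ψ : ratioSubgroup s →* A)
    (i : Fin m) : ψ ⟨s i * (s 0)⁻¹, gen_mem_ratioSubgroup i⟩ = 1 := by
  let e : ratioSubgroup s →* ratioSubgroup s :=
    ((MulAut.conj (s 0)).toMonoidHom.comp (ratioSubgroup s).subtype).codRestrict _
      fun x => hs.conj_mem_ratioSubgroup hm x.2
  let g : Fin m → ratioSubgroup s := fun i => ⟨s i * (s 0)⁻¹, gen_mem_ratioSubgroup i⟩
  have hfar : ∀ i j : Fin m, (i : ℕ) + 2 ≤ j → g i * e (g j) = g j * e (g i) := by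
    intro i j h
    apply Subtype.ext
    calc s i * (s 0)⁻¹ * (s 0 * (s j * (s 0)⁻¹) * (s 0)⁻¹)
        = s i * s j * ((s 0)⁻¹ * (s 0)⁻¹) := by group
      _ = s j * s i * ((s 0)⁻¹ * (s 0)⁻¹) := by rw [hs.comm i j h]
      _ = s j * (s 0)⁻¹ * (s 0 * (s i * (s 0)⁻¹) * (s 0)⁻¹) := by group
  have hbraid : ∀ i j : Fin m, (i : ℕ) + 1 = j →
      g i * e (g j) * e (e (g i)) = g j * e (g i) * e (e (g j)) := by
    intro i j h
    apply Subtype.ext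
    calc s i * (s 0)⁻¹ * (s 0 * (s j * (s 0)⁻¹) * (s 0)⁻¹) *
          (s 0 * (s 0 * (s i * (s 0)⁻¹) * (s 0)⁻¹) * (s 0)⁻¹)
        = s i * s j * s i * ((s 0)⁻¹ * (s 0)⁻¹ * (s 0)⁻¹) := by group
      _ = s j * s i * s j * ((s 0)⁻¹ * (s 0)⁻¹ * (s 0)⁻¹) := by rw [hs.braid i j h]
      _ = s j * (s 0)⁻¹ * (s 0 * (s i * (s 0)⁻¹) * (s 0)⁻¹) *
          (s 0 * (s 0 * (s j * (s 0)⁻¹) * (s 0)⁻¹) * (s 0)⁻¹) := by group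
  calc ψ (g i) = ψ (g 0) := by
        refine apply_eq_apply_of_braid_relations hm (fun i => ψ (g i)) (fun i => ψ (e (g i)))
          (fun i => ψ (e (e (g i)))) (fun i j h => ?_) (fun i j h => ?_) i 0
        · simpa only [map_mul] using congrArg (fun x => ψ (e x)) (hfar i j h)
        · simpa only [map_mul] using congrArg ψ (hbraid i j h)
    _ = 1 := by rw [show g 0 = 1 from Subtype.ext (mul_inv_cancel _), map_one]

theorem commutator_ratioSubgroup_eq_top (hm : 4 ≤ m) : commutator (ratioSubgroup s) = ⊤ := by
  rw [← Abelianization.ker_of, eq_top_iff]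
  refine (Subgroup.closure_closure_coe_preimage (k := Set.range fun i => s i * (s 0)⁻¹)).ge.trans
    ((Subgroup.closure_le _).2 ?_)
  rintro x ⟨i, hi⟩
  exact (congrArg Abelianization.of (Subtype.ext hi.symm)).trans (hs.map_gen_eq_one hm _ i)

end IsBraidFamily

end RatioSubgroup

theorem braid_ratioSubgroup_ne_bot {m : ℕ} [NeZero m] (hm : 2 ≤ m) :
    ratioSubgroup (PresentedGroup.of : Fin m → PresentedGroup (braidRels m)) ≠ ⊥ := by
  rw [Ne, Subgroup.eq_bot_iff_forall]
  push Not
  refine ⟨_, gen_mem_ratioSubgroup ⟨1, hm⟩, fun h => ?_⟩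
  -- in the permutation representation `σ₁σ₀⁻¹` sends `0` to `2`
  have := congrArg (fun x => PresentedGroup.toGroup (isBraidFamily_swap m).lift_eq_one x 0) h
  simp at this

/-- For `n ≥ 5`, the braid group `Bₙ` admits no Conradian left order. -/
theorem stmt_18 (n : ℕ) (hn : 5 ≤ n) :
    ¬ ∃ r : BraidGroup n → BraidGroup n → Prop, IsLeftOrder r ∧ IsConradian r := by
  rintro ⟨r, hLO, hC⟩
  have : NeZero (n - 1) := ⟨by omega⟩
  have := (Subgroup.nontrivial_iff_ne_bot _).2 (braid_ratioSubgroup_ne_bot (m := n - 1) (by omega))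
  exact hC.commutator_ne_top_of_isLeftOrder hLO _
    ((isBraidFamily_of _).commutator_ratioSubgroup_eq_top (by omega))
end
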